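/- The product of any two idempotents in the semigroup ORCT_n of order-preserving or order-reversing full contractions of [n] is again an idempotent; hence the idempotents of ORCT_n form a subsemigroup (a band), so the regular part of ORCT_n is orthodox. -/

import Mathlib

/-!
An idempotent order-reversing map is order preserving, since it equals its own square. If `ε` is
a monotone contraction and `ε u = u`, then `ε v` lies between `v` and `u`: monotonicity puts it
on the side of `u` facing `v`, and contraction keeps it no farther from `u` than `v` is. For
`x` put `u = ε x` and `v = τ u`; then `τ v = v = τ u`, so the monotone `τ` collapses the interval
between `v` and `u`, which contains `ε v`, to the point `v`. Hence `τ (ε (τ (ε x))) = τ (ε x)`.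
-/

/-- A full transformation of the chain `Fin n` is a contraction if it does not
increase distances. -/
def IsContraction {n : ℕ} (α : Fin n → Fin n) : Prop :=
  ∀ x y : Fin n, |(α x : ℤ) - (α y : ℤ)| ≤ |(x : ℤ) - (y : ℤ)|

/-- Membership in `ORCT_n`: a full contraction that is order preserving or
order reversing. -/
def InORCT {n : ℕ} (α : Fin n → Fin n) : Prop :=
  IsContraction α ∧ (Monotone α ∨ Antitone α)

theorem Antitone.monotone_of_comp_self {α : Type*} [Preorder α] {f : α → α}
    (hf : Antitone f) (hff : f ∘ f = f) : Monotone f :=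
  hff ▸ hf.comp hf

theorem InORCT.monotone_of_comp_self {n : ℕ} {ε : Fin n → Fin n} (hε : InORCT ε)
    (hεε : ε ∘ ε = ε) : Monotone ε :=
  hε.2.elim id fun h => h.monotone_of_comp_self hεε

theorem IsContraction.comp {n : ℕ} {α β : Fin n → Fin n} (hβ : IsContraction β)
    (hα : IsContraction α) : IsContraction (β ∘ α) :=
  fun x y => (hβ (α x) (α y)).trans (hα x y)

theorem IsContraction.apply_mem_uIcc_of_apply_eq_self {n : ℕ} {ε : Fin n → Fin n}
    (hc : IsContraction ε) (hm : Monotone ε) {u : Fin n} (hu : ε u = u) (v : Fin n) :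
    ε v ∈ Set.uIcc v u := by
  have hdist := hc v u
  rw [hu] at hdist
  rcases le_total v u with hvu | huv
  · have hεvu : ε v ≤ u := hu ▸ hm hvu
    refine Set.mem_uIcc_of_le ?_ hεvu
    rw [Fin.le_def] at hvu hεvu ⊢
    rw [abs_of_nonpos (by omega), abs_of_nonpos (by omega)] at hdist
    omega
  · have huεv : u ≤ ε v := hu ▸ hm huv
    refine Set.mem_uIcc_of_ge huεv ?_
    rw [Fin.le_def] at huv huεv ⊢
    rw [abs_of_nonneg (by omega), abs_of_nonneg (by omega)] at hdist
    omega

/-- The product of two idempotents of `ORCT_n` is again an idempotent of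
`ORCT_n` (so the idempotents form a band and the regular part is orthodox).
The product `ετ` (apply `ε` then `τ`) is `τ ∘ ε` as functions. -/
theorem product_of_idempotents_ORCT {n : ℕ} (ε τ : Fin n → Fin n)
    (hε : InORCT ε) (hεid : ε ∘ ε = ε)
    (hτ : InORCT τ) (hτid : τ ∘ τ = τ) :
    InORCT (τ ∘ ε) ∧ (τ ∘ ε) ∘ (τ ∘ ε) = τ ∘ ε := by
  have hεm := hε.monotone_of_comp_self hεid
  have hτm := hτ.monotone_of_comp_self hτid
  refine ⟨⟨hτ.1.comp hε.1, Or.inl (hτm.comp hεm)⟩, funext fun x => ?_⟩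
  have hu : ε (ε x) = ε x := congrFun hεid x
  have hv : τ (τ (ε x)) = τ (ε x) := congrFun hτid (ε x)
  have hεv := hε.1.apply_mem_uIcc_of_apply_eq_self hεm hu (τ (ε x))
  simpa [hv] using hτm.mapsTo_uIcc hεv
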